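/- There exist universal constants C ≥ c > 0 such that for all a, q ∈ [0,∞) and all integers n ≥ 2 the following holds. If a ∈ [0,1], then c^{1+q}·n^{1-a}·(1+q)^{1+q}·(ln n)^{1+q}/((1-a)·ln n + 1 + q)^{1+q} ≤ ∑_{i=1}^{n} i^{-a}·(ln(n/i))^{q} ≤ C^{1+q}·n^{1-a}·(1+q)^{1+q}·(ln n)^{1+q}/((1-a)·ln n + 1 + q)^{1+q}. If a ∈ [1,∞), then c·[(ln n)^{1+q}/((a-1)·ln n + 1 + q) + (ln n)^{q}] ≤ ∑_{i=1}^{n} i^{-a}·(ln(n/i))^{q} ≤ C·(ln n)^{1+q}/((a-1)·ln n + 1 + q) + (ln n)^{q}. -/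

import Mathlib

/-!
Write `L = log n` and `S` for the sum. Everything is reduced to partial sums of `∑ i ^ (-p)`,
which are compared with `∫₁ᴺ x ^ (-p) dx = N ^ max (1 - p) 0 · log N · φ (|1 - p| log N)`, where
`φ u = (1 - e⁻ᵘ) / u` lies between `1 / (1 + u)` and `2 / (1 + u)`.

Lower bounds: for `i ≤ eᵛ` we have `log (n / i) ≥ L - v`, so `S ≥ (L - v) ^ q ∑_{i ≤ eᵛ} i ^ (-a)`.
Take `v = L - t / 2` when `a ≤ 1`, where `t = (1 + q) L / ((1 - a) L + 1 + q)` (`lorentzScale`)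
is comparable to `min L ((1 + q) / (1 - a))`, and `v = L / ((a - 1) L + 1 + q)` when `a ≥ 1`; in
the second case the term `i = 1` supplies `L ^ q`.

Upper bounds: `w ^ q ≤ T ^ q e^{q (w / T - 1)}` bounds `log (n / i) ^ q` by
`T ^ q e^{q (L / T - 1)} i ^ (-q / T)`, which leaves a p-series with exponent shifted by `q / T`.
For `a ≥ 1` take `T = L`. For `a ≤ 1` take `T = (1 + q) / (1 - a)` when `(1 - a) L > 1 + q`, and
otherwise simply use `log (n / i) ≤ L`.
-/

open Real Finset

lemma div_one_add_le_one_sub_exp_neg {u : ℝ} (hu : 0 ≤ u) : u / (1 + u) ≤ 1 - exp (-u) := by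
  have h : exp (-u) * (1 + u) ≤ 1 := by
    calc exp (-u) * (1 + u) ≤ exp (-u) * exp u := by gcongr; linarith [add_one_le_exp u]
      _ = 1 := by rw [← exp_add, neg_add_cancel, exp_zero]
  rw [div_le_iff₀ (by linarith)]
  nlinarith

lemma one_sub_exp_neg_le_two_mul_div {u : ℝ} (hu : 0 ≤ u) : 1 - exp (-u) ≤ 2 * u / (1 + u) := by
  have h₁ : 1 - exp (-u) ≤ u := by linarith [add_one_le_exp (-u)]
  have h₂ : 1 - exp (-u) ≤ 1 := by linarith [exp_pos (-u)]
  rw [le_div_iff₀ (by linarith)]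
  nlinarith

lemma rpow_le_exp_mul_sub_one {z q : ℝ} (hz : 0 ≤ z) (hq : 0 ≤ q) :
    z ^ q ≤ exp (q * (z - 1)) := by
  rcases hz.eq_or_lt with rfl | hz
  · rcases hq.eq_or_lt with rfl | hq
    · simp
    · rw [zero_rpow hq.ne']; positivity
  · rw [rpow_def_of_pos hz, mul_comm]
    gcongr
    exact log_le_sub_one_of_pos hz

lemma exp_neg_one_le_one_sub_inv_rpow {q y : ℝ} (hq : 0 ≤ q) (hy : 1 + q ≤ y) :
    exp (-1) ≤ (1 - y⁻¹) ^ q := by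
  rcases hq.eq_or_lt with rfl | hq
  · simp
  have hy1 : 1 < y := by linarith
  have hpos : 0 < 1 - y⁻¹ := by rw [sub_pos]; exact inv_lt_one_of_one_lt₀ hy1
  have hlog : -1 ≤ q * log (1 - y⁻¹) := by
    have h := one_sub_inv_le_log_of_pos hpos
    have e : 1 - (1 - y⁻¹)⁻¹ = -(y - 1)⁻¹ := by
      have : y - 1 ≠ 0 := by linarith
      field_simp
      ring
    have hq' : q * (y - 1)⁻¹ ≤ 1 := by
      rw [← div_eq_mul_inv, div_le_one (by linarith)]; linarith
    nlinarith
  rw [rpow_def_of_pos hpos, mul_comm]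
  exact exp_le_exp.mpr hlog

lemma two_rpow_le_exp {q : ℝ} (hq : 0 ≤ q) : (2 : ℝ) ^ q ≤ exp q := by
  calc (2 : ℝ) ^ q ≤ exp 1 ^ q := rpow_le_rpow (by norm_num) (by linarith [exp_one_gt_d9]) hq
    _ = exp q := by rw [← exp_mul, one_mul]

lemma two_mul_rpow_mul_le_exp_three_rpow {q t : ℝ} (hq : 0 ≤ q) (ht : 0 ≤ t) :
    (2 * t) ^ q * (8 * t) ≤ exp 3 ^ (1 + q) * t ^ (1 + q) := by
  have h8 : (8 : ℝ) ≤ exp 3 := by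
    simpa [show (2 : ℝ) ^ (3 : ℝ) = 8 by norm_num] using two_rpow_le_exp (q := 3) (by norm_num)
  have h2 : (2 : ℝ) ^ q ≤ exp (3 * q) := (two_rpow_le_exp hq).trans (by gcongr; linarith)
  rw [mul_rpow zero_le_two ht, rpow_add' ht (by linarith), rpow_one, ← exp_mul, mul_add, mul_one,
    exp_add]
  calc 2 ^ q * t ^ q * (8 * t) = (8 * 2 ^ q) * (t * t ^ q) := by ring
    _ ≤ (exp 3 * exp (3 * q)) * (t * t ^ q) := by gcongr

lemma exp_neg_three_rpow_mul_rpow_le {q t : ℝ} (hq : 0 ≤ q) (ht : 0 ≤ t) :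
    exp (-3) ^ (1 + q) * t ^ (1 + q) ≤ exp (-(1 + q) / 2) * (t / 2) ^ q * (t / (2 * (1 + q))) := by
  have hc : exp (-3) ^ (1 + q) * (2 * 2 ^ q * (1 + q)) ≤ exp (-(1 + q) / 2) := by
    rw [← exp_mul]
    calc exp (-3 * (1 + q)) * (2 * 2 ^ q * (1 + q))
        ≤ exp (-3 * (1 + q)) * (exp 1 * exp q * exp q) := by
          gcongr
          · linarith [exp_one_gt_d9]
          · exact two_rpow_le_exp hq
          · linarith [add_one_le_exp q]
      _ ≤ exp (-(1 + q) / 2) := by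
          rw [← exp_add, ← exp_add, ← exp_add]
          gcongr
          linarith
  calc exp (-3) ^ (1 + q) * t ^ (1 + q)
      = exp (-3) ^ (1 + q) * (2 * 2 ^ q * (1 + q)) * ((t / 2) ^ q * (t / (2 * (1 + q)))) := by
        rw [div_rpow ht zero_le_two, rpow_add' ht (by linarith), rpow_one]
        field_simp
    _ ≤ exp (-(1 + q) / 2) * ((t / 2) ^ q * (t / (2 * (1 + q)))) := by gcongr
    _ = _ := by ring

lemma integral_rpow_neg_of_ne_one {p N : ℝ} (hp : p ≠ 1) (hN : 0 < N) :
    ∫ x in (1 : ℝ)..N, x ^ (-p) = (N ^ (1 - p) - 1) / (1 - p) := by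
  rw [integral_rpow (Or.inr ⟨by contrapose! hp; linarith, ?_⟩)]
  · rw [one_rpow, neg_add_eq_sub]
  · rw [Set.mem_uIcc]; rintro (⟨h, -⟩ | ⟨h, -⟩) <;> linarith

lemma integral_rpow_neg_eq {p N : ℝ} (hp : p ≠ 1) (hN : 1 ≤ N) :
    ∫ x in (1 : ℝ)..N, x ^ (-p) =
      N ^ max (1 - p) 0 * ((1 - exp (-(|1 - p| * log N))) / |1 - p|) := by
  have hN0 : 0 < N := by linarith
  rw [integral_rpow_neg_of_ne_one hp hN0]
  rcases (sub_ne_zero.mpr hp.symm).lt_or_gt with hp' | hp'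
  · rw [max_eq_right hp'.le, abs_of_neg hp', rpow_zero, rpow_def_of_pos hN0]
    field_simp
    ring_nf
  · rw [max_eq_left hp'.le, abs_of_pos hp', rpow_def_of_pos hN0, mul_comm (log N), mul_div_assoc',
      mul_sub, mul_one, ← exp_add, add_neg_cancel, exp_zero]

lemma integral_rpow_neg_bounds (p : ℝ) {N : ℝ} (hN : 1 ≤ N) :
    log N * N ^ max (1 - p) 0 / (1 + |1 - p| * log N) ≤ ∫ x in (1 : ℝ)..N, x ^ (-p) ∧
      ∫ x in (1 : ℝ)..N, x ^ (-p) ≤ 2 * (log N * N ^ max (1 - p) 0 / (1 + |1 - p| * log N)) := by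
  have hℓ : 0 ≤ log N := log_nonneg hN
  rcases eq_or_ne p 1 with rfl | hp
  · have h : ∫ x in (1 : ℝ)..N, x ^ (-1 : ℝ) = log N := by
      simp [rpow_neg_one, integral_inv_of_pos one_pos (by linarith : (0 : ℝ) < N)]
    rw [h, sub_self, max_self, rpow_zero, abs_zero, zero_mul, add_zero, div_one, mul_one]
    exact ⟨le_rfl, by linarith⟩
  rw [integral_rpow_neg_eq hp hN]
  set u := |1 - p| * log N
  have hs : 0 < |1 - p| := abs_pos.mpr (sub_ne_zero.mpr hp.symm)
  have hu : 0 ≤ u := by positivity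
  have lower : log N / (1 + u) ≤ (1 - exp (-u)) / |1 - p| := by
    have h := div_one_add_le_one_sub_exp_neg hu
    rw [div_le_iff₀ (by linarith)] at h
    rw [div_le_div_iff₀ (by linarith) hs]
    linarith [show log N * |1 - p| = u by ring]
  have upper : (1 - exp (-u)) / |1 - p| ≤ 2 * log N / (1 + u) := by
    have h := one_sub_exp_neg_le_two_mul_div hu
    rw [le_div_iff₀ (by linarith)] at h
    rw [div_le_div_iff₀ hs (by linarith)]
    linarith [show 2 * log N * |1 - p| = 2 * u by ring]
  have hP : 0 < N ^ max (1 - p) 0 := rpow_pos_of_pos (by linarith) _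
  constructor
  · calc log N * N ^ max (1 - p) 0 / (1 + u) = N ^ max (1 - p) 0 * (log N / (1 + u)) := by ring
      _ ≤ _ := by gcongr
  · calc N ^ max (1 - p) 0 * ((1 - exp (-u)) / |1 - p|)
        ≤ N ^ max (1 - p) 0 * (2 * log N / (1 + u)) := by gcongr
      _ = _ := by ring

lemma antitoneOn_rpow_neg {p a b : ℝ} (hp : 0 ≤ p) (ha : 0 < a) :
    AntitoneOn (fun x : ℝ => x ^ (-p)) (Set.Icc a b) :=
  (antitoneOn_rpow_Ioi_of_exponent_nonpos (neg_nonpos.mpr hp)).mono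
    fun _ hx => lt_of_lt_of_le ha hx.1

lemma integral_rpow_neg_le_sum_floor {p R : ℝ} (hp : 0 ≤ p) (hR : 1 ≤ R) :
    ∫ x in (1 : ℝ)..R, x ^ (-p) ≤ ∑ i ∈ Icc 1 ⌊R⌋₊, (i : ℝ) ^ (-p) := by
  set m := ⌊R⌋₊
  calc ∫ x in (1 : ℝ)..R, x ^ (-p)
      ≤ ∫ x in ((1 : ℕ) : ℝ)..((m + 1 : ℕ) : ℝ), x ^ (-p) := by
        refine intervalIntegral.integral_mono_interval (by simp) hR ?_ ?_ ?_
        · push_cast; exact (Nat.lt_floor_add_one R).le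
        · filter_upwards [MeasureTheory.ae_restrict_mem measurableSet_Ioc] with x hx
          exact rpow_nonneg (by simp at hx; linarith [hx.1]) _
        · refine intervalIntegral.intervalIntegrable_rpow (Or.inr ?_)
          rw [Set.mem_uIcc]; push_cast; rintro (⟨h, -⟩ | ⟨h, -⟩) <;> linarith
    _ ≤ ∑ i ∈ Ico 1 (m + 1), (i : ℝ) ^ (-p) :=
        (antitoneOn_rpow_neg hp (by simp)).integral_le_sum_Ico (by omega)
    _ = ∑ i ∈ Icc 1 m, (i : ℝ) ^ (-p) := by rw [Ico_add_one_right_eq_Icc]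

lemma sum_rpow_neg_le {p : ℝ} (hp : 0 ≤ p) {n : ℕ} (hn : 1 ≤ n) :
    ∑ i ∈ Icc 1 n, (i : ℝ) ^ (-p) ≤ 1 + ∫ x in (1 : ℝ)..n, x ^ (-p) := by
  rw [← sum_Ioc_add_eq_sum_Icc hn, ← Ico_add_one_add_one_eq_Ioc,
    ← sum_Ico_add' (fun i : ℕ => (i : ℝ) ^ (-p)), add_comm]
  gcongr
  · simp
  · have hanti := antitoneOn_rpow_neg hp (b := (n : ℝ)) (by simp : (0 : ℝ) < ((1 : ℕ) : ℝ))
    simpa only [Nat.cast_one] using hanti.sum_le_integral_Ico hn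

noncomputable def weightedLogSum (a q : ℝ) (n : ℕ) : ℝ :=
  ∑ i ∈ Icc 1 n, (i : ℝ) ^ (-a) * log ((n : ℝ) / i) ^ q

section weightedLogSum

variable {a q : ℝ} {n : ℕ}

lemma log_div_natCast_nonneg {i : ℕ} (hi : i ∈ Icc 1 n) : 0 ≤ log ((n : ℝ) / i) := by
  rw [mem_Icc] at hi
  refine log_nonneg ?_
  rw [le_div_iff₀ (by exact_mod_cast hi.1), one_mul]
  exact_mod_cast hi.2

lemma log_div_natCast_eq {i : ℕ} (hi : i ∈ Icc 1 n) :
    log ((n : ℝ) / i) = log n - log i := by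
  rw [mem_Icc] at hi
  exact log_div (by norm_cast; omega) (by norm_cast; omega)

lemma log_div_rpow_mul_sum_le_weightedLogSum (hq : 0 ≤ q) {m : ℕ} (hm : 1 ≤ m) (hmn : m ≤ n) :
    log ((n : ℝ) / m) ^ q * ∑ i ∈ Icc 1 m, (i : ℝ) ^ (-a) ≤ weightedLogSum a q n := by
  rw [mul_sum]
  refine (sum_le_sum fun i hi => ?_).trans
    (sum_le_sum_of_subset_of_nonneg (Icc_subset_Icc_right hmn) fun i hi _ => ?_)
  · rw [mem_Icc] at hi
    have hi0 : (0 : ℝ) < i := by exact_mod_cast hi.1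
    rw [mul_comm]
    gcongr
    · exact log_div_natCast_nonneg (mem_Icc.mpr ⟨hm, hmn⟩)
    · exact div_pos (by exact_mod_cast hm.trans hmn) (by exact_mod_cast hm)
    · exact_mod_cast hi.2
  · exact mul_nonneg (rpow_nonneg (Nat.cast_nonneg _) _) (rpow_nonneg (log_div_natCast_nonneg hi) _)

lemma rpow_mul_integral_le_weightedLogSum (ha : 0 ≤ a) (hq : 0 ≤ q) (hn : 1 ≤ n) {v : ℝ}
    (hv : 0 ≤ v) (hvn : v ≤ log n) :
    (log n - v) ^ q * ∫ x in (1 : ℝ)..exp v, x ^ (-a) ≤ weightedLogSum a q n := by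
  have hR : 1 ≤ exp v := one_le_exp hv
  set m := ⌊exp v⌋₊
  have hm : 1 ≤ m := Nat.le_floor (by simpa using hR)
  have hmR : (m : ℝ) ≤ exp v := Nat.floor_le (by linarith)
  have hmn : m ≤ n := by
    have : exp v ≤ n := by
      rw [← exp_log (by exact_mod_cast hn : (0 : ℝ) < n)]; exact exp_le_exp.mpr hvn
    exact_mod_cast hmR.trans this
  have hlog : log n - v ≤ log ((n : ℝ) / m) := by
    rw [log_div_natCast_eq (mem_Icc.mpr ⟨hm, hmn⟩)]
    linarith [(log_le_log (by exact_mod_cast hm) hmR).trans (log_exp v).le]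
  calc (log n - v) ^ q * ∫ x in (1 : ℝ)..exp v, x ^ (-a)
      ≤ (log n - v) ^ q * ∑ i ∈ Icc 1 m, (i : ℝ) ^ (-a) :=
        mul_le_mul_of_nonneg_left (integral_rpow_neg_le_sum_floor ha hR)
          (rpow_nonneg (by linarith) _)
    _ ≤ log ((n : ℝ) / m) ^ q * ∑ i ∈ Icc 1 m, (i : ℝ) ^ (-a) :=
        mul_le_mul_of_nonneg_right (rpow_le_rpow (by linarith) hlog hq)
          (sum_nonneg fun i _ => rpow_nonneg (Nat.cast_nonneg i) _)
    _ ≤ weightedLogSum a q n := log_div_rpow_mul_sum_le_weightedLogSum hq hm hmn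

lemma weightedLogSum_le_log_rpow_mul (hq : 0 ≤ q) :
    weightedLogSum a q n ≤ log n ^ q * ∑ i ∈ Icc 1 n, (i : ℝ) ^ (-a) := by
  rw [mul_sum]
  refine sum_le_sum fun i hi => ?_
  have h : log ((n : ℝ) / i) ≤ log n := by
    rw [log_div_natCast_eq hi]
    linarith [log_natCast_nonneg i]
  rw [mul_comm]
  exact mul_le_mul_of_nonneg_right (rpow_le_rpow (log_div_natCast_nonneg hi) h hq)
    (rpow_nonneg (Nat.cast_nonneg _) _)

lemma weightedLogSum_le_rpow_mul_exp_mul {T : ℝ} (hq : 0 ≤ q) (hT : 0 < T) :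
    weightedLogSum a q n ≤
      T ^ q * exp (q * (log n / T - 1)) * ∑ i ∈ Icc 1 n, (i : ℝ) ^ (-(a + q / T)) := by
  rw [mul_sum]
  refine sum_le_sum fun i hi => ?_
  have hi0 : (0 : ℝ) < i := by exact_mod_cast (mem_Icc.mp hi).1
  have hw := log_div_natCast_nonneg hi
  calc (i : ℝ) ^ (-a) * log ((n : ℝ) / i) ^ q
      = (i : ℝ) ^ (-a) * (T ^ q * (log ((n : ℝ) / i) / T) ^ q) := by
        rw [div_rpow hw hT.le, mul_div_cancel₀ _ (rpow_pos_of_pos hT q).ne']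
    _ ≤ (i : ℝ) ^ (-a) * (T ^ q * exp (q * (log ((n : ℝ) / i) / T - 1))) := by
        gcongr
        exact rpow_le_exp_mul_sub_one (div_nonneg hw hT.le) hq
    _ = T ^ q * exp (q * (log n / T - 1)) * (i : ℝ) ^ (-(a + q / T)) := by
        rw [log_div_natCast_eq hi, neg_add, rpow_add hi0, rpow_def_of_pos hi0 (-(q / T))]
        rw [show q * ((log n - log i) / T - 1) = q * (log n / T - 1) + log i * -(q / T) by ring,
          exp_add]
        ring

end weightedLogSum

noncomputable def lorentzScale (β q L : ℝ) : ℝ := (1 + q) * L / (β * L + 1 + q)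

noncomputable def lorentzProfile (a q : ℝ) (n : ℕ) : ℝ :=
  (n : ℝ) ^ (1 - a) * lorentzScale (1 - a) q (log n) ^ (1 + q)

lemma rpow_mul_lorentzProfile_eq (c : ℝ) {a q : ℝ} {n : ℕ} (ha : a ≤ 1) (hq : 0 ≤ q) :
    c ^ (1 + q) * (n : ℝ) ^ (1 - a) * (1 + q) ^ (1 + q) * log n ^ (1 + q) /
        ((1 - a) * log n + 1 + q) ^ (1 + q) = c ^ (1 + q) * lorentzProfile a q n := by
  have hL := log_natCast_nonneg n
  rw [lorentzProfile, lorentzScale, div_rpow (by positivity) (by nlinarith),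
    mul_rpow (by linarith) hL]
  ring

section lorentzScale

variable {β q L : ℝ}

lemma lorentzScale_mul_eq (hβ : 0 ≤ β) (hq : 0 ≤ q) (hL : 0 ≤ L) :
    lorentzScale β q L * (β * L + 1 + q) = (1 + q) * L :=
  div_mul_cancel₀ _ (by nlinarith [mul_nonneg hβ hL])

lemma lorentzScale_pos (hβ : 0 ≤ β) (hq : 0 ≤ q) (hL : 0 < L) : 0 < lorentzScale β q L :=
  div_pos (by positivity) (by nlinarith [mul_nonneg hβ hL.le])

lemma lorentzScale_le (hβ : 0 ≤ β) (hq : 0 ≤ q) (hL : 0 ≤ L) : lorentzScale β q L ≤ L := by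
  rw [lorentzScale, div_le_iff₀ (by nlinarith [mul_nonneg hβ hL])]
  nlinarith [mul_nonneg hβ hL]

lemma mul_lorentzScale_le (hβ : 0 ≤ β) (hq : 0 ≤ q) (hL : 0 ≤ L) :
    β * lorentzScale β q L ≤ 1 + q := by
  nlinarith [lorentzScale_mul_eq hβ hq hL, mul_nonneg hβ hL]

lemma lorentzScale_mul_one_add_div_mul (hβ : 0 ≤ β) (hq : 0 ≤ q) (hL : 0 ≤ L) :
    lorentzScale β q L * (1 + β / (1 + q) * L) = L := by
  have h := lorentzScale_mul_eq hβ hq hL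
  rw [show β * L + 1 + q = (1 + q) * (1 + β / (1 + q) * L) by field_simp; ring] at h
  exact mul_left_cancel₀ (by linarith : 1 + q ≠ 0) (by linear_combination h)

lemma le_two_mul_lorentzScale (hβ : 0 ≤ β) (hq : 0 ≤ q) (hL : 0 ≤ L) (h : β * L ≤ 1 + q) :
    L ≤ 2 * lorentzScale β q L := by
  rw [lorentzScale, mul_div_assoc', le_div_iff₀ (by nlinarith [mul_nonneg hβ hL])]
  nlinarith

lemma div_le_two_mul_lorentzScale (hβ : 0 < β) (hq : 0 ≤ q) (hL : 0 ≤ L) (h : 1 + q ≤ β * L) :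
    (1 + q) / β ≤ 2 * lorentzScale β q L := by
  rw [div_le_iff₀ hβ]
  nlinarith [lorentzScale_mul_eq hβ.le hq hL]

end lorentzScale

section regimes

variable {a q : ℝ} {n : ℕ}

lemma exp_neg_three_rpow_mul_lorentzProfile_le_weightedLogSum (ha0 : 0 ≤ a) (ha1 : a ≤ 1)
    (hq : 0 ≤ q) (hn : 2 ≤ n) :
    exp (-3) ^ (1 + q) * lorentzProfile a q n ≤ weightedLogSum a q n := by
  have hn1 : 1 ≤ n := by omega
  have hL : 0 < log n := log_pos (by exact_mod_cast hn)
  rw [lorentzProfile]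
  set L := log (n : ℝ)
  set β := 1 - a
  set t := lorentzScale β q L
  have hβ : 0 ≤ β := by linarith
  have htx := lorentzScale_mul_eq hβ hq hL.le
  have ht := lorentzScale_pos hβ hq hL
  have htL := lorentzScale_le hβ hq hL.le
  have hβt := mul_lorentzScale_le hβ hq hL.le
  set v := L - t / 2 with hv_def
  have hv0 : 0 ≤ v := by linarith
  have hS := rpow_mul_integral_le_weightedLogSum ha0 hq hn1 hv0 (by linarith)
  have hI := (integral_rpow_neg_bounds a (one_le_exp hv0)).1
  rw [log_exp, max_eq_left hβ, abs_of_nonneg hβ, ← exp_mul] at hI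
  have hv : t / (2 * (1 + q)) ≤ v / (1 + β * v) := by
    have : 0 ≤ β * v := mul_nonneg hβ hv0
    rw [div_le_div_iff₀ (by positivity) (by linarith)]
    nlinarith
  have hexp : (n : ℝ) ^ β * exp (-(1 + q) / 2) ≤ exp (v * β) := by
    rw [rpow_def_of_pos (by positivity), ← exp_add]
    gcongr
    nlinarith
  calc exp (-3) ^ (1 + q) * ((n : ℝ) ^ β * t ^ (1 + q))
      = (n : ℝ) ^ β * (exp (-3) ^ (1 + q) * t ^ (1 + q)) := by ring
    _ ≤ (n : ℝ) ^ β * (exp (-(1 + q) / 2) * (t / 2) ^ q * (t / (2 * (1 + q)))) :=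
        mul_le_mul_of_nonneg_left (exp_neg_three_rpow_mul_rpow_le hq ht.le) (by positivity)
    _ = (t / 2) ^ q * ((n : ℝ) ^ β * exp (-(1 + q) / 2) * (t / (2 * (1 + q)))) := by ring
    _ ≤ (t / 2) ^ q * (exp (v * β) * (v / (1 + β * v))) := by gcongr
    _ = (L - v) ^ q * (v * exp (v * β) / (1 + β * v)) := by rw [hv_def]; ring_nf
    _ ≤ (L - v) ^ q * ∫ x in (1 : ℝ)..exp v, x ^ (-a) := by
        gcongr
        exact rpow_nonneg (by linarith) _
    _ ≤ weightedLogSum a q n := hS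

lemma weightedLogSum_le_of_mul_log_le (ha0 : 0 ≤ a) (ha1 : a ≤ 1) (hq : 0 ≤ q) (hn : 2 ≤ n)
    (h : (1 - a) * log n ≤ 1 + q) :
    weightedLogSum a q n ≤ (2 * lorentzScale (1 - a) q (log n)) ^ q *
      (8 * lorentzScale (1 - a) q (log n)) * (n : ℝ) ^ (1 - a) := by
  have hn1 : 1 ≤ n := by omega
  have hL : 1 / 2 ≤ log n := by
    linarith [log_two_gt_d9, log_le_log two_pos (by exact_mod_cast hn : (2 : ℝ) ≤ n)]
  set L := log (n : ℝ)
  set β := 1 - a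
  set t := lorentzScale β q L
  have hβ : 0 ≤ β := by linarith
  have ht := lorentzScale_pos hβ hq (by linarith : 0 < L)
  have hLt := le_two_mul_lorentzScale hβ hq (by linarith) h
  have hnβ : 1 ≤ (n : ℝ) ^ β := one_le_rpow (by exact_mod_cast hn1) hβ
  have hI := (integral_rpow_neg_bounds a (N := n) (by exact_mod_cast hn1)).2
  rw [max_eq_left hβ, abs_of_nonneg hβ] at hI
  calc weightedLogSum a q n ≤ L ^ q * ∑ i ∈ Icc 1 n, (i : ℝ) ^ (-a) :=
        weightedLogSum_le_log_rpow_mul hq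
    _ ≤ L ^ q * (1 + 2 * (L * (n : ℝ) ^ β / (1 + β * L))) := by
        gcongr
        exact (sum_rpow_neg_le ha0 hn1).trans (by linarith)
    _ ≤ (2 * t) ^ q * (8 * t * (n : ℝ) ^ β) := by
        gcongr
        have : L * (n : ℝ) ^ β / (1 + β * L) ≤ L * (n : ℝ) ^ β :=
          div_le_self (by positivity) (by nlinarith)
        nlinarith
    _ = (2 * t) ^ q * (8 * t) * (n : ℝ) ^ β := by ring

lemma weightedLogSum_le_of_lt_mul_log (ha0 : 0 ≤ a) (hq : 0 ≤ q) (hn : 2 ≤ n)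
    (h : 1 + q < (1 - a) * log n) :
    weightedLogSum a q n ≤ (2 * lorentzScale (1 - a) q (log n)) ^ q *
      (8 * lorentzScale (1 - a) q (log n)) * (n : ℝ) ^ (1 - a) := by
  have hn1 : 1 ≤ n := by omega
  have hn0 : (0 : ℝ) < n := by positivity
  have hL : 0 < log n := log_pos (by exact_mod_cast hn)
  set L := log (n : ℝ)
  set β := 1 - a
  set t := lorentzScale β q L
  have hβ : 0 < β := by
    by_contra hb
    nlinarith
  have htγ := lorentzScale_mul_one_add_div_mul hβ.le hq hL.le
  set γ := β / (1 + q) with hγ_def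
  have hγ : 0 < γ := by positivity
  have hβγ : β = (1 + q) * γ := by rw [hγ_def]; field_simp
  have hγt : γ⁻¹ ≤ 2 * t := by
    rw [hγ_def, inv_div]; exact div_le_two_mul_lorentzScale hβ hq hL.le h.le
  have hγ1 : 1 ≤ γ⁻¹ := (one_le_inv₀ hγ).mpr (by rw [hγ_def, div_le_one (by linarith)]; linarith)
  have h8t : 0 ≤ 8 * t := by linarith
  have hpow : ∀ s, (n : ℝ) ^ s = exp (L * s) := fun s => rpow_def_of_pos hn0 s
  have hp : 1 - (a + q / γ⁻¹) = γ := by rw [div_inv_eq_mul]; linarith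
  have hI := (integral_rpow_neg_bounds (a + q / γ⁻¹) (N := n) (by exact_mod_cast hn1)).2
  rw [hp, max_eq_left hγ.le, abs_of_pos hγ] at hI
  have hnγ : L * (n : ℝ) ^ γ / (1 + γ * L) = t * exp (L * γ) := by
    rw [hpow, div_eq_iff (by positivity)]
    linear_combination -exp (L * γ) * htγ
  have hexp : exp (L * ((1 + q) * γ)) = exp (q * (L * γ)) * exp (L * γ) := by
    rw [← exp_add]; ring_nf
  calc weightedLogSum a q n
      ≤ γ⁻¹ ^ q * exp (q * (L / γ⁻¹ - 1)) * ∑ i ∈ Icc 1 n, (i : ℝ) ^ (-(a + q / γ⁻¹)) :=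
        weightedLogSum_le_rpow_mul_exp_mul hq (inv_pos.mpr hγ)
    _ ≤ γ⁻¹ ^ q * exp (q * (L * γ)) * (1 + 2 * (t * exp (L * γ))) := by
        gcongr
        · rw [div_inv_eq_mul]; linarith
        · exact (sum_rpow_neg_le (by positivity) hn1).trans (by rw [← hnγ]; linarith)
    _ ≤ γ⁻¹ ^ q * (8 * t) * (exp (q * (L * γ)) * exp (L * γ)) := by
        have : 1 ≤ exp (L * γ) := one_le_exp (by positivity)
        have : 1 + 2 * (t * exp (L * γ)) ≤ exp (L * γ) * (8 * t) := by nlinarith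
        calc γ⁻¹ ^ q * exp (q * (L * γ)) * (1 + 2 * (t * exp (L * γ)))
            ≤ γ⁻¹ ^ q * exp (q * (L * γ)) * (exp (L * γ) * (8 * t)) := by gcongr
          _ = _ := by ring
    _ ≤ (2 * t) ^ q * (8 * t) * (n : ℝ) ^ β := by
        rw [hpow, hβγ, hexp]
        gcongr

lemma weightedLogSum_le_exp_three_rpow_mul_lorentzProfile (ha0 : 0 ≤ a) (ha1 : a ≤ 1)
    (hq : 0 ≤ q) (hn : 2 ≤ n) :
    weightedLogSum a q n ≤ exp 3 ^ (1 + q) * lorentzProfile a q n := by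
  have ht := lorentzScale_pos (β := 1 - a) (by linarith) hq
    (log_pos (by exact_mod_cast hn : (1 : ℝ) < n))
  calc weightedLogSum a q n
      ≤ (2 * lorentzScale (1 - a) q (log n)) ^ q * (8 * lorentzScale (1 - a) q (log n)) *
          (n : ℝ) ^ (1 - a) := by
        rcases le_or_gt ((1 - a) * log n) (1 + q) with h | h
        · exact weightedLogSum_le_of_mul_log_le ha0 ha1 hq hn h
        · exact weightedLogSum_le_of_lt_mul_log ha0 hq hn h
    _ ≤ exp 3 ^ (1 + q) * lorentzScale (1 - a) q (log n) ^ (1 + q) * (n : ℝ) ^ (1 - a) :=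
        mul_le_mul_of_nonneg_right (two_mul_rpow_mul_le_exp_three_rpow hq ht.le) (by positivity)
    _ = exp 3 ^ (1 + q) * lorentzProfile a q n := by rw [lorentzProfile]; ring

lemma log_rpow_one_add_div_le_weightedLogSum (ha : 1 ≤ a) (hq : 0 ≤ q) (hn : 2 ≤ n) :
    log n ^ (1 + q) / ((a - 1) * log n + 1 + q) ≤ 2 * exp 1 * weightedLogSum a q n := by
  have hn1 : 1 ≤ n := by omega
  have hL : 0 < log n := log_pos (by exact_mod_cast hn)
  set L := log (n : ℝ)
  set y := (a - 1) * L + 1 + q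
  have hy : 1 + q ≤ y := by nlinarith
  have hy0 : 0 < y := by linarith
  set v := L / y with hv_def
  have hv0 : 0 ≤ v := by positivity
  have hvL : v ≤ L := div_le_self hL.le (by linarith)
  have hS := rpow_mul_integral_le_weightedLogSum (a := a) (by linarith) hq hn1 hv0 hvL
  have hI := (integral_rpow_neg_bounds a (one_le_exp hv0)).1
  rw [log_exp, max_eq_right (by linarith), rpow_zero, abs_of_nonpos (by linarith)] at hI
  have hv : v / 2 ≤ v * 1 / (1 + -(1 - a) * v) := by
    have : -(1 - a) * v ≤ 1 := by
      rw [hv_def, ← mul_div_assoc, div_le_one hy0]; linarith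
    rw [mul_one]
    exact div_le_div_of_nonneg_left hv0 (by nlinarith) (by linarith)
  have hLv : exp (-1) * L ^ q ≤ (L - v) ^ q := by
    have hy1 : 0 ≤ 1 - y⁻¹ := sub_nonneg.mpr (inv_le_one_of_one_le₀ (by linarith))
    rw [show L - v = L * (1 - y⁻¹) by rw [hv_def]; ring, mul_rpow hL.le hy1, mul_comm]
    exact mul_le_mul_of_nonneg_left (exp_neg_one_le_one_sub_inv_rpow hq hy) (by positivity)
  calc L ^ (1 + q) / y = 2 * exp 1 * (exp (-1) * L ^ q * (v / 2)) := by
        have h : exp 1 * exp (-1) = 1 := by rw [← exp_add, add_neg_cancel, exp_zero]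
        rw [rpow_add hL, rpow_one, hv_def]
        linear_combination -(L * L ^ q / y) * h
    _ ≤ 2 * exp 1 * ((L - v) ^ q * (v * 1 / (1 + -(1 - a) * v))) := by gcongr
    _ ≤ 2 * exp 1 * ((L - v) ^ q * ∫ x in (1 : ℝ)..exp v, x ^ (-a)) := by gcongr
    _ ≤ 2 * exp 1 * weightedLogSum a q n := by gcongr

lemma exp_neg_three_mul_le_weightedLogSum (ha : 1 ≤ a) (hq : 0 ≤ q) (hn : 2 ≤ n) :
    exp (-3) * (log n ^ (1 + q) / ((a - 1) * log n + 1 + q) + log n ^ q) ≤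
      weightedLogSum a q n := by
  have hLq : log n ^ q ≤ weightedLogSum a q n := by
    simpa using log_div_rpow_mul_sum_le_weightedLogSum (a := a) hq le_rfl (by omega : 1 ≤ n)
  have hS0 : 0 ≤ weightedLogSum a q n := (rpow_nonneg (log_natCast_nonneg n) q).trans hLq
  have hc : exp (-3) * (2 * exp 1 + 1) ≤ 1 := by
    calc exp (-3) * (2 * exp 1 + 1) ≤ exp (-3) * (3 * exp 1) := by
          gcongr; linarith [one_le_exp zero_le_one]
      _ = 3 / exp 2 := by
          have h : exp (-3) * exp 1 * exp 2 = 1 := by rw [← exp_add, ← exp_add]; norm_num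
          rw [eq_div_iff (exp_pos 2).ne']
          linear_combination 3 * h
      _ ≤ 1 := (div_le_one (exp_pos 2)).mpr (by linarith [add_one_le_exp 2])
  calc exp (-3) * (log n ^ (1 + q) / ((a - 1) * log n + 1 + q) + log n ^ q)
      ≤ exp (-3) * (2 * exp 1 * weightedLogSum a q n + weightedLogSum a q n) := by
        gcongr; exact log_rpow_one_add_div_le_weightedLogSum ha hq hn
    _ = exp (-3) * (2 * exp 1 + 1) * weightedLogSum a q n := by ring
    _ ≤ weightedLogSum a q n := mul_le_of_le_one_left hS0 hc

lemma weightedLogSum_le_exp_three_mul_add (ha : 1 ≤ a) (hq : 0 ≤ q) (hn : 2 ≤ n) :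
    weightedLogSum a q n ≤
      exp 3 * log n ^ (1 + q) / ((a - 1) * log n + 1 + q) + log n ^ q := by
  have hn1 : 1 ≤ n := by omega
  have hL : 0 < log n := log_pos (by exact_mod_cast hn)
  set L := log (n : ℝ) with hL_def
  have hW := weightedLogSum_le_rpow_mul_exp_mul (a := a) (n := n) hq hL
  rw [div_self hL.ne', sub_self, mul_zero, exp_zero, mul_one] at hW
  have hI := (integral_rpow_neg_bounds (a + q / L) (N := n) (by exact_mod_cast hn1)).2
  have hp : 1 - (a + q / L) ≤ 0 := by
    have : 0 ≤ q / L := by positivity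
    linarith
  rw [max_eq_right hp, rpow_zero, abs_of_nonpos hp, ← hL_def,
    show 1 + -(1 - (a + q / L)) * L = (a - 1) * L + 1 + q by field_simp; ring] at hI
  have h3 : (2 : ℝ) ≤ exp 3 := by linarith [add_one_le_exp 3]
  calc weightedLogSum a q n ≤ L ^ q * (1 + 2 * (L * 1 / ((a - 1) * L + 1 + q))) :=
        hW.trans (by gcongr; exact (sum_rpow_neg_le (by positivity) hn1).trans (by linarith))
    _ = L ^ q + 2 * (L * L ^ q) / ((a - 1) * L + 1 + q) := by ring
    _ ≤ L ^ q + exp 3 * (L * L ^ q) / ((a - 1) * L + 1 + q) := by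
        have : 0 ≤ (a - 1) * L := mul_nonneg (by linarith) hL.le
        gcongr
    _ = exp 3 * L ^ (1 + q) / ((a - 1) * L + 1 + q) + L ^ q := by
        rw [rpow_add hL, rpow_one]; ring

end regimes

/-- There exist universal constants `C ≥ c > 0` such that for all `a, q ∈ [0,∞)` and all
integers `n ≥ 2`: if `a ∈ [0,1]` then the sum `∑_{i=1}^n i^{-a} (ln (n/i))^q` is bounded
above and below by `C^{1+q}` resp. `c^{1+q}` times
`n^{1-a} (1+q)^{1+q} (ln n)^{1+q} / ((1-a) ln n + 1 + q)^{1+q}`, and if `a ∈ [1,∞)` the sum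
is bounded above by `C (ln n)^{1+q}/((a-1) ln n + 1 + q) + (ln n)^q` and below by
`c [(ln n)^{1+q}/((a-1) ln n + 1 + q) + (ln n)^q]`.
(Real powers are `Real.rpow`, so `(ln (n/n))^0 = 0^0 = 1` as in the convention.) -/
theorem lorentz_basic_sum_bound :
    ∃ C c : ℝ, 0 < c ∧ c ≤ C ∧
      ∀ (a q : ℝ) (n : ℕ), 0 ≤ a → 0 ≤ q → 2 ≤ n →
        (a ≤ 1 →
          c ^ (1 + q) * (n : ℝ) ^ (1 - a) * (1 + q) ^ (1 + q) * Real.log n ^ (1 + q) /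
              ((1 - a) * Real.log n + 1 + q) ^ (1 + q) ≤
            (∑ i ∈ Finset.Icc 1 n, (i : ℝ) ^ (-a) * Real.log ((n : ℝ) / i) ^ q) ∧
          (∑ i ∈ Finset.Icc 1 n, (i : ℝ) ^ (-a) * Real.log ((n : ℝ) / i) ^ q) ≤
            C ^ (1 + q) * (n : ℝ) ^ (1 - a) * (1 + q) ^ (1 + q) * Real.log n ^ (1 + q) /
              ((1 - a) * Real.log n + 1 + q) ^ (1 + q)) ∧
        (1 ≤ a →
          c * (Real.log n ^ (1 + q) / ((a - 1) * Real.log n + 1 + q) + Real.log n ^ q) ≤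
            (∑ i ∈ Finset.Icc 1 n, (i : ℝ) ^ (-a) * Real.log ((n : ℝ) / i) ^ q) ∧
          (∑ i ∈ Finset.Icc 1 n, (i : ℝ) ^ (-a) * Real.log ((n : ℝ) / i) ^ q) ≤
            C * Real.log n ^ (1 + q) / ((a - 1) * Real.log n + 1 + q) + Real.log n ^ q) := by
  refine ⟨exp 3, exp (-3), exp_pos _, exp_le_exp.mpr (by norm_num), fun a q n ha hq hn =>
    ⟨fun ha1 => ?_, fun ha1 => ⟨exp_neg_three_mul_le_weightedLogSum ha1 hq hn,
      weightedLogSum_le_exp_three_mul_add ha1 hq hn⟩⟩⟩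
  rw [rpow_mul_lorentzProfile_eq _ ha1 hq, rpow_mul_lorentzProfile_eq _ ha1 hq]
  exact ⟨exp_neg_three_rpow_mul_lorentzProfile_le_weightedLogSum ha ha1 hq hn,
    weightedLogSum_le_exp_three_rpow_mul_lorentzProfile ha ha1 hq hn⟩
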